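/- arXiv:2501.09750 — 4 statements merged into one kernel-verified Lean document; each statement's English description precedes it below -/
import Mathlib

section
/- Let G = (V, E) be a finite simple graph and d a natural number at least the size of every clique of G. Let G* be obtained from G by, for each maximal clique C of G with |C| = k < d, adding d − k new vertices that are adjacent to all vertices of C and to each other, where new vertices added for distinct maximal cliques are not adjacent to each other nor to any old vertex outside their clique. Then χ(G) ≤ d if and only if χ(G*) ≤ d. -/
theorem chromatic_number_of_padded_graph
    {V : Type*} [Fintype V] [DecidableEq V] (G : SimpleGraph V) (d : ℕ)
    (hd : ∀ s : Finset V, G.IsClique ↑s → s.card ≤ d)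
    {W : Type*}
    (e : W ≃ Σ C : {s : Finset V // G.IsClique ↑s ∧
        ∀ t : Finset V, G.IsClique ↑t → s ⊆ t → s = t}, Fin (d - C.1.card))
    (H : SimpleGraph (V ⊕ W))
    (hH : ∀ x y : V ⊕ W, H.Adj x y ↔
      (match x, y with
        | Sum.inl u, Sum.inl v => G.Adj u v
        | Sum.inl u, Sum.inr w => u ∈ (e w).1.1
        | Sum.inr w, Sum.inl u => u ∈ (e w).1.1
        | Sum.inr w, Sum.inr w' => (e w).1 = (e w').1 ∧ e w ≠ e w')) :
    G.chromaticNumber ≤ (d : ℕ∞) ↔ H.chromaticNumber ≤ (d : ℕ∞) := by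
  rw [SimpleGraph.chromaticNumber_le_iff_colorable,
    SimpleGraph.chromaticNumber_le_iff_colorable]
  constructor
  · rintro ⟨c⟩
    -- for each maximal clique, an injection avoiding the colors used on it
    have key : ∀ C : {s : Finset V // G.IsClique ↑s ∧
        ∀ t : Finset V, G.IsClique ↑t → s ⊆ t → s = t},
        ∃ g : Fin (d - C.1.card) → Fin d, Function.Injective g ∧
          ∀ i, g i ∉ C.1.image c := by
      intro C
      set T : Finset (Fin d) := Finset.univ \ C.1.image c with hT
      have hTcard : d - C.1.card ≤ T.card := by
        have h1 : T.card = d - (C.1.image c).card := by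
          rw [hT, Finset.card_sdiff_of_subset (Finset.subset_univ _), Finset.card_univ,
            Fintype.card_fin]
        rw [h1]
        exact Nat.sub_le_sub_left (Finset.card_image_le) d
      obtain ⟨t, hts, htc⟩ := Finset.exists_subset_card_eq hTcard
      refine ⟨fun i => (t.orderIsoOfFin htc i : Fin d), ?_, ?_⟩
      · intro i j hij
        exact (t.orderIsoOfFin htc).injective (Subtype.coe_injective hij)
      · intro i
        have := hts (t.orderIsoOfFin htc i).2
        rw [hT, Finset.mem_sdiff] at this
        exact this.2
    choose g hginj hgmem using key
    refine ⟨SimpleGraph.Coloring.mk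
      (Sum.elim c (fun w => g (e w).1 (e w).2)) ?_⟩
    intro a b hab
    rw [hH] at hab
    match a, b with
    | Sum.inl u, Sum.inl v =>
      exact c.valid hab
    | Sum.inl u, Sum.inr w =>
      simp only [Sum.elim_inl, Sum.elim_inr]
      intro h
      exact hgmem (e w).1 (e w).2 (h ▸ Finset.mem_image_of_mem c hab)
    | Sum.inr w, Sum.inl u =>
      simp only [Sum.elim_inl, Sum.elim_inr]
      intro h
      exact hgmem (e w).1 (e w).2 (h ▸ Finset.mem_image_of_mem c hab)
    | Sum.inr w, Sum.inr w' =>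
      simp only [Sum.elim_inr]
      obtain ⟨h1, h2⟩ := hab
      revert h1 h2
      generalize e w = p
      generalize e w' = q
      obtain ⟨C1, i1⟩ := p
      obtain ⟨C2, i2⟩ := q
      intro h1 h2
      dsimp only at h1 ⊢
      subst h1
      have : i1 ≠ i2 := by
        intro h; exact h2 (by rw [h])
      intro hgg
      exact this (hginj C1 hgg)
  · rintro ⟨c⟩
    refine ⟨SimpleGraph.Coloring.mk (fun v => c (Sum.inl v)) ?_⟩
    intro a b hab
    exact c.valid ((hH (Sum.inl a) (Sum.inl b)).mpr hab)
end

section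
/- Let Λ be a finite nonempty set, μ a probability mass function on Λ, and a, a', b, b' : Λ → {−1, 1}. Then Σ_λ μ(λ)·(a(λ)b(λ) + a(λ)b'(λ) + a'(λ)b(λ) − a'(λ)b'(λ)) ≤ 2. -/
theorem chsh_classical_bound
    {Λ : Type*} [Fintype Λ] [Nonempty Λ]
    (μ : Λ → ℝ) (hμ0 : ∀ l, 0 ≤ μ l) (hμ1 : ∑ l, μ l = 1)
    (a a' b b' : Λ → ℝ)
    (ha : ∀ l, a l = 1 ∨ a l = -1) (ha' : ∀ l, a' l = 1 ∨ a' l = -1)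
    (hb : ∀ l, b l = 1 ∨ b l = -1) (hb' : ∀ l, b' l = 1 ∨ b' l = -1) :
    ∑ l, μ l * (a l * b l + a l * b' l + a' l * b l - a' l * b' l) ≤ 2 := by
  calc ∑ l, μ l * (a l * b l + a l * b' l + a' l * b l - a' l * b' l)
      ≤ ∑ l, μ l * 2 := by
        apply Finset.sum_le_sum
        intro l _
        apply mul_le_mul_of_nonneg_left _ (hμ0 l)
        rcases ha l with h1 | h1 <;> rcases ha' l with h2 | h2 <;>
          rcases hb l with h3 | h3 <;> rcases hb' l with h4 | h4 <;>
          rw [h1, h2, h3, h4] <;> norm_num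
    _ = 2 := by rw [← Finset.sum_mul, hμ1, one_mul]
end

section
/- There is no finite probability space (Λ, μ) with functions a, a', b, b' : Λ → {−1, 1} such that μ(a·b = 1) = μ(a·b' = 1) = μ(a'·b = 1) = μ(a'·b' = −1) = cos²(π/8). -/
open scoped Classical in
theorem no_classical_model_of_maximal_chsh_violation :
    ¬ ∃ (n : ℕ) (μ : Fin n → ℝ) (a a' b b' : Fin n → ℝ),
      (∀ l, 0 ≤ μ l) ∧ (∑ l, μ l = 1) ∧
      (∀ l, a l = 1 ∨ a l = -1) ∧ (∀ l, a' l = 1 ∨ a' l = -1) ∧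
      (∀ l, b l = 1 ∨ b l = -1) ∧ (∀ l, b' l = 1 ∨ b' l = -1) ∧
      (∑ l, if a l * b l = 1 then μ l else 0) = Real.cos (Real.pi / 8) ^ 2 ∧
      (∑ l, if a l * b' l = 1 then μ l else 0) = Real.cos (Real.pi / 8) ^ 2 ∧
      (∑ l, if a' l * b l = 1 then μ l else 0) = Real.cos (Real.pi / 8) ^ 2 ∧
      (∑ l, if a' l * b' l = -1 then μ l else 0) = Real.cos (Real.pi / 8) ^ 2 := by
  rintro ⟨n, μ, a, a', b, b', hμ, hsum, ha, ha', hb, hb', h1, h2, h3, h4⟩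
  -- pointwise bound: at most three of the four conditions can hold
  have key : ∀ l, (if a l * b l = 1 then μ l else 0) +
      (if a l * b' l = 1 then μ l else 0) +
      (if a' l * b l = 1 then μ l else 0) +
      (if a' l * b' l = -1 then μ l else 0) ≤ 3 * μ l := by
    intro l
    have h := hμ l
    rcases ha l with h1 | h1 <;> rcases ha' l with h2 | h2 <;>
      rcases hb l with h3 | h3 <;> rcases hb' l with h4 | h4 <;>
      simp [h1, h2, h3, h4] <;> norm_num <;> linarith
  have hle : (∑ l, if a l * b l = 1 then μ l else 0) +
      (∑ l, if a l * b' l = 1 then μ l else 0) +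
      (∑ l, if a' l * b l = 1 then μ l else 0) +
      (∑ l, if a' l * b' l = -1 then μ l else 0) ≤ 3 := by
    calc _ = ∑ l, ((if a l * b l = 1 then μ l else 0) +
        (if a l * b' l = 1 then μ l else 0) +
        (if a' l * b l = 1 then μ l else 0) +
        (if a' l * b' l = -1 then μ l else 0)) := by
          rw [← Finset.sum_add_distrib, ← Finset.sum_add_distrib, ← Finset.sum_add_distrib]
      _ ≤ ∑ l, 3 * μ l := Finset.sum_le_sum fun l _ => key l
      _ = 3 := by rw [← Finset.mul_sum, hsum, mul_one]
  rw [h1, h2, h3, h4] at hle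
  have hcos : Real.cos (Real.pi / 8) ^ 2 = (2 + Real.sqrt 2) / 4 := by
    have := Real.cos_sq (Real.pi / 8)
    have h8 : 2 * (Real.pi / 8) = Real.pi / 4 := by ring
    rw [Real.cos_sq, h8, Real.cos_pi_div_four] at *
    ring
  rw [hcos] at hle
  have h2lt : (1 : ℝ) < Real.sqrt 2 := by
    rw [show (1:ℝ) = Real.sqrt 1 by simp]
    exact Real.sqrt_lt_sqrt (by norm_num) (by norm_num)
  linarith
end

section
/- Let I be a finite nonempty index set, d ≥ 1, and for each i ∈ I let P_i be a set of cardinality d; assume the P_i may overlap (they are subsets of a common ambient set). Suppose there is a family of bijections l_{ji} : P_i → P_j for all i, j ∈ I with l_{ij} = l_{ji}⁻¹, l_{ii} = id, and l_{ji} restricted to P_i ∩ P_j equal to the identity, satisfying the flatness condition that for every finite cycle i₀, i₁, …, i_{n−1}, i₀ in I the composite l_{i₀ i_{n−1}} ∘ ⋯ ∘ l_{i₂ i₁} ∘ l_{i₁ i₀} is the identity on P_{i₀}. Then there exists a family of bijections ζ_i : P_i → Fin d such that ζ_j ∘ l_{ji} = ζ_i for all i, j ∈ I; in particular ζ_i and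 ζ_j agree on P_i ∩ P_j. Conversely, given any family of bijections ζ_i : P_i → Fin d that pairwise agree on overlaps P_i ∩ P_j, the bijections l_{ji} := ζ_j⁻¹ ∘ ζ_i form such a flat family restricting to the identity on overlaps. -/
/-
Flatness says exactly that the transition maps form a cocycle, `l j k ∘ l i j = l i k` with
`l i i = id`. Transporting every context to a fixed base context `P i₀` and then choosing one
bijection `P i₀ ≃ Fin d` therefore gives a colouring compatible with the connection, and the
overlap condition makes it agree on intersections. Conversely the transition maps
`ζ j⁻¹ ∘ ζ i` of a colouring form a cocycle, hence a flat connection.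
-/

/-- One step of transport along a context connection: move the current point
(living in some context `P i`) to the context `P j`. -/
def connectionStep {X I : Type*} {P : I → Set X}
    (l : ∀ i j : I, ↥(P i) → ↥(P j)) :
    (Σ i : I, ↥(P i)) → I → Σ j : I, ↥(P j) :=
  fun p j => ⟨j, l p.1 j p.2⟩

/-- A context connection is flat if transporting around any cycle
`i → i₁ → ⋯ → iₙ₋₁ → i` is the identity on `P i`. -/
def ConnectionFlat {X I : Type*} {P : I → Set X}
    (l : ∀ i j : I, ↥(P i) → ↥(P j)) : Prop :=
  ∀ (i : I) (x : ↥(P i)) (L : List I),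
    (L ++ [i]).foldl (connectionStep l) ⟨i, x⟩ = ⟨i, x⟩

section Connection

variable {X I : Type*} {P : I → Set X} {l : ∀ i j : I, ↥(P i) → ↥(P j)}

theorem foldl_connectionStep_of_comp (hcomp : ∀ i j k x, l j k (l i j x) = l i k x)
    (L : List I) (j : I) (p : Σ i : I, ↥(P i)) :
    (L ++ [j]).foldl (connectionStep l) p = ⟨j, l p.1 j p.2⟩ := by
  induction L generalizing p with
  | nil => rfl
  | cons a L ih => simp [ih, connectionStep, hcomp]

theorem connectionFlat_iff_comp :
    ConnectionFlat l ↔ (∀ i x, l i i x = x) ∧ ∀ i j k x, l j k (l i j x) = l i k x := by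
  constructor
  · intro hflat
    have cycle (i : I) (x y : ↥(P i)) (L : List I)
        (h : (L ++ [i]).foldl (connectionStep l) ⟨i, x⟩ = ⟨i, y⟩) : y = x :=
      sigma_mk_injective (β := fun i => ↥(P i)) (h.symm.trans (hflat i x L))
    have hback (i k : I) (z : ↥(P k)) : l i k (l k i z) = z := cycle k z _ [i] rfl
    refine ⟨fun i x => cycle i x _ [] rfl, fun i j k x => ?_⟩
    calc l j k (l i j x) = l i k (l k i (l j k (l i j x))) := (hback i k _).symm
      _ = l i k x := congrArg (l i k) (cycle i x _ [j, k] rfl)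
  · rintro ⟨hid, hcomp⟩ i x L
    rw [foldl_connectionStep_of_comp hcomp, hid]

theorem ConnectionFlat.apply_self (hflat : ConnectionFlat l) (i : I) (x : ↥(P i)) :
    l i i x = x :=
  (connectionFlat_iff_comp.1 hflat).1 i x

theorem ConnectionFlat.comp_apply (hflat : ConnectionFlat l) (i j k : I) (x : ↥(P i)) :
    l j k (l i j x) = l i k x :=
  (connectionFlat_iff_comp.1 hflat).2 i j k x

def ConnectionFlat.transportEquiv (hflat : ConnectionFlat l) (i j : I) : ↥(P i) ≃ ↥(P j) where
  toFun := l i j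
  invFun := l j i
  left_inv x := by rw [hflat.comp_apply, hflat.apply_self]
  right_inv y := by rw [hflat.comp_apply, hflat.apply_self]

theorem ConnectionFlat.exists_equiv_comp_eq {α : Type*} (hflat : ConnectionFlat l) (i₀ : I)
    (e : ↥(P i₀) ≃ α) : ∃ ζ : ∀ i : I, ↥(P i) ≃ α, ∀ i j x, ζ j (l i j x) = ζ i x :=
  ⟨fun i => (hflat.transportEquiv i i₀).trans e, fun i j x => by
    simp [transportEquiv, hflat.comp_apply]⟩

theorem eq_of_coe_eq_of_comp_eq {α : Type*}
    (hover : ∀ (i j : I) (x : ↥(P i)), (x : X) ∈ P j → (l i j x : X) = x)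
    {ζ : ∀ i : I, ↥(P i) → α} (hζ : ∀ i j x, ζ j (l i j x) = ζ i x)
    {i j : I} (x : ↥(P i)) (y : ↥(P j)) (hxy : (x : X) = y) : ζ i x = ζ j y := by
  have hly : l i j x = y := Subtype.ext ((hover i j x (hxy ▸ y.2)).trans hxy)
  rw [← hζ i j x, hly]

end Connection

section Colouring

variable {X I α : Type*} {P : I → Set X}

def connectionOfColouring (ζ : ∀ i : I, ↥(P i) ≃ α) (i j : I) (x : ↥(P i)) : ↥(P j) :=
  (ζ j).symm (ζ i x)

theorem connectionFlat_connectionOfColouring (ζ : ∀ i : I, ↥(P i) ≃ α) :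
    ConnectionFlat (connectionOfColouring ζ) :=
  connectionFlat_iff_comp.2 ⟨fun i x => by simp [connectionOfColouring],
    fun i j k x => by simp [connectionOfColouring]⟩

theorem coe_connectionOfColouring_of_mem {ζ : ∀ i : I, ↥(P i) ≃ α}
    (hζ : ∀ (i j : I) (x : ↥(P i)) (y : ↥(P j)), (x : X) = y → ζ i x = ζ j y)
    {i j : I} (x : ↥(P i)) (hx : (x : X) ∈ P j) : (connectionOfColouring ζ i j x : X) = x := by
  rw [connectionOfColouring, hζ i j x ⟨x, hx⟩ rfl, Equiv.symm_apply_apply]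

end Colouring

theorem flat_context_connection_iff_d_colouring_general
    {X I : Type*} [Nonempty I] (P : I → Set X) (d : ℕ) (hd : 1 ≤ d)
    (hcard : ∀ i, Nat.card ↥(P i) = d) :
    (∀ l : ∀ i j : I, ↥(P i) → ↥(P j),
      (∀ i j x, l j i (l i j x) = x) →
      (∀ i x, l i i x = x) →
      (∀ (i j : I) (x : ↥(P i)), (x : X) ∈ P j → ((l i j x : X) = (x : X))) →
      ConnectionFlat l →
      ∃ ζ : ∀ i : I, ↥(P i) ≃ Fin d,
        (∀ (i j : I) (x : ↥(P i)), ζ j (l i j x) = ζ i x) ∧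
        (∀ (i j : I) (x : ↥(P i)) (y : ↥(P j)), (x : X) = (y : X) → ζ i x = ζ j y)) ∧
    (∀ ζ : ∀ i : I, ↥(P i) ≃ Fin d,
      (∀ (i j : I) (x : ↥(P i)) (y : ↥(P j)), (x : X) = (y : X) → ζ i x = ζ j y) →
      ((∀ (i j : I) (x : ↥(P i)),
          (fun i j (x : ↥(P i)) => (ζ j).symm (ζ i x)) j i
            ((fun i j (x : ↥(P i)) => (ζ j).symm (ζ i x)) i j x) = x) ∧
        (∀ (i : I) (x : ↥(P i)),
          (fun i j (x : ↥(P i)) => (ζ j).symm (ζ i x)) i i x = x) ∧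
        (∀ (i j : I) (x : ↥(P i)), (x : X) ∈ P j →
          (((fun i j (x : ↥(P i)) => (ζ j).symm (ζ i x)) i j x : X) = (x : X))) ∧
        ConnectionFlat (fun i j (x : ↥(P i)) => (ζ j).symm (ζ i x)))) := by
  constructor
  · intro l _ _ hover hflat
    obtain ⟨i₀⟩ := ‹Nonempty I›
    have : Finite ↥(P i₀) := Nat.finite_of_card_ne_zero (by rw [hcard]; omega)
    obtain ⟨ζ, hζ⟩ := hflat.exists_equiv_comp_eq i₀ (Finite.equivFinOfCardEq (hcard i₀))
    exact ⟨ζ, hζ, fun i j => eq_of_coe_eq_of_comp_eq hover hζ⟩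
  · intro ζ hζ
    exact ⟨fun i j x => by simp, fun i x => by simp,
      fun i j => coe_connectionOfColouring_of_mem hζ, connectionFlat_connectionOfColouring ζ⟩

theorem flat_context_connection_iff_d_colouring
    {X I : Type*} [Finite I] [Nonempty I] (P : I → Set X) (d : ℕ) (hd : 1 ≤ d)
    (hcard : ∀ i, Nat.card ↥(P i) = d) :
    (∀ l : ∀ i j : I, ↥(P i) → ↥(P j),
      (∀ i j x, l j i (l i j x) = x) →
      (∀ i x, l i i x = x) →
      (∀ (i j : I) (x : ↥(P i)), (x : X) ∈ P j → ((l i j x : X) = (x : X))) →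
      ConnectionFlat l →
      ∃ ζ : ∀ i : I, ↥(P i) ≃ Fin d,
        (∀ (i j : I) (x : ↥(P i)), ζ j (l i j x) = ζ i x) ∧
        (∀ (i j : I) (x : ↥(P i)) (y : ↥(P j)), (x : X) = (y : X) → ζ i x = ζ j y)) ∧
    (∀ ζ : ∀ i : I, ↥(P i) ≃ Fin d,
      (∀ (i j : I) (x : ↥(P i)) (y : ↥(P j)), (x : X) = (y : X) → ζ i x = ζ j y) →
      ((∀ (i j : I) (x : ↥(P i)),
          (fun i j (x : ↥(P i)) => (ζ j).symm (ζ i x)) j i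
            ((fun i j (x : ↥(P i)) => (ζ j).symm (ζ i x)) i j x) = x) ∧
        (∀ (i : I) (x : ↥(P i)),
          (fun i j (x : ↥(P i)) => (ζ j).symm (ζ i x)) i i x = x) ∧
        (∀ (i j : I) (x : ↥(P i)), (x : X) ∈ P j →
          (((fun i j (x : ↥(P i)) => (ζ j).symm (ζ i x)) i j x : X) = (x : X))) ∧
        ConnectionFlat (fun i j (x : ↥(P i)) => (ζ j).symm (ζ i x)))) :=
  flat_context_connection_iff_d_colouring_general P d hd hcard
end
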